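/- Let ‖·‖ be a compatible unitarily invariant norm with associated symmetric gauge function ψ, and let {V_i}_{i=1}^m be a uniformly weighted (m,1,d)-protocol (i.e. a uniform tight frame of m vectors, so V_i V_i* = d/m for all i) with m ≥ 2. Then max_{i≠j} |V_i V_j*| ≥ c_{m,1,d} and e_2^ψ(V) ≥ ψ( d/m + c_{m,1,d} , d/m − c_{m,1,d} ). If moreover V_i V_j* = c_{m,1,d}·q_{ij} with q_{ij} ∈ ℂ, |q_{ij}| = 1, for all i ≠ j, then equality holds in the e_2^ψ bound; and if ‖·‖ is 2-strongly strict, then conversely equality in the e_2^ψ bound implies |V_i V_j*| = c_{m,1,d} for all i ≠ j. -/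

import Mathlib

open Matrix BigOperators
open scoped ComplexOrder

noncomputable section

variable {𝕜 : Type*} [RCLike 𝕜]

/-- Sum of the `k` largest entries of a vector `x : Fin n → ℝ`,
as the supremum of the sums over subsets of cardinality `k`. -/
noncomputable def kMaxSum {n : ℕ} (x : Fin n → ℝ) (k : ℕ) : ℝ :=
  sSup ((fun t : Finset (Fin n) => ∑ i ∈ t, x i) '' {t : Finset (Fin n) | t.card = k})

/-- `x ≺_w y` : submajorization of real vectors. -/
def SubMajVec {n : ℕ} (x y : Fin n → ℝ) : Prop :=
  ∀ k : ℕ, k ≤ n → kMaxSum x k ≤ kMaxSum y k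

/-- `A ≺_w B` : submajorization of self-adjoint matrices (via eigenvalues). -/
def SubMajMat {n : ℕ} (A B : Matrix (Fin n) (Fin n) 𝕜) : Prop :=
  ∃ (hA : A.IsHermitian) (hB : B.IsHermitian), SubMajVec hA.eigenvalues hB.eigenvalues

/-- `A ≺ B` : majorization of self-adjoint matrices. -/
def MajMat {n : ℕ} (A B : Matrix (Fin n) (Fin n) 𝕜) : Prop :=
  SubMajMat A B ∧ A.trace = B.trace

/-- The q-potential `P_q(V) = Σ_{i,j} |V_i V_j*|²` of a reconstruction system. -/
noncomputable def qPotential {m l d : ℕ} (V : Fin m → Matrix (Fin l) (Fin d) 𝕜) :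
    Matrix (Fin l) (Fin l) 𝕜 :=
  ∑ i, ∑ j, (V i * (V j)ᴴ)ᴴ * (V i * (V j)ᴴ)

/-- `tr |A|² = tr(AᴴA)`, as a real number. -/
noncomputable def traceAbsSq {a b : ℕ} (A : Matrix (Fin a) (Fin b) 𝕜) : ℝ :=
  RCLike.re (Aᴴ * A).trace

/-- `tr |A| = tr((AᴴA)^{1/2})`, the sum of the singular values of `A`. -/
noncomputable def traceAbs {a b : ℕ} (A : Matrix (Fin a) (Fin b) 𝕜) : ℝ :=
  ∑ j, Real.sqrt ((Matrix.posSemidef_conjTranspose_mul_self A).1.eigenvalues j)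

/-- A unitarily invariant norm on `M_n(𝕜)`. -/
structure UINorm (n : ℕ) (𝕜 : Type*) [RCLike 𝕜] where
  N : Matrix (Fin n) (Fin n) 𝕜 → ℝ
  nonneg : ∀ A, 0 ≤ N A
  eq_zero : ∀ A, N A = 0 → A = 0
  triangle : ∀ A B, N (A + B) ≤ N A + N B
  smul_eq : ∀ (c : 𝕜) (A), N (c • A) = ‖c‖ * N A
  invariant : ∀ (A : Matrix (Fin n) (Fin n) 𝕜) (U W : Matrix.unitaryGroup (Fin n) 𝕜),
    N ((U : Matrix (Fin n) (Fin n) 𝕜) * A * (W : Matrix (Fin n) (Fin n) 𝕜)) = N A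

/-- `X ⊕ 0_t` : padding a square matrix with `t` zero rows and columns. -/
noncomputable def padMat {r : ℕ} (t : ℕ) (X : Matrix (Fin r) (Fin r) 𝕜) :
    Matrix (Fin (r + t)) (Fin (r + t)) 𝕜 :=
  Matrix.reindex finSumFinEquiv finSumFinEquiv (Matrix.fromBlocks X 0 0 0)

/-- A compatible unitarily invariant norm: a family of unitarily invariant norms,
one in each dimension, unchanged by adjoining zero rows and columns. -/
structure CUIN (𝕜 : Type*) [RCLike 𝕜] where
  N : ∀ n : ℕ, Matrix (Fin n) (Fin n) 𝕜 → ℝ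
  nonneg : ∀ n A, 0 ≤ N n A
  eq_zero : ∀ n A, N n A = 0 → A = 0
  triangle : ∀ n A B, N n (A + B) ≤ N n A + N n B
  smul_eq : ∀ n (c : 𝕜) (A), N n (c • A) = ‖c‖ * N n A
  invariant : ∀ n (A : Matrix (Fin n) (Fin n) 𝕜) (U W : Matrix.unitaryGroup (Fin n) 𝕜),
    N n ((U : Matrix (Fin n) (Fin n) 𝕜) * A * (W : Matrix (Fin n) (Fin n) 𝕜)) = N n A
  compatible : ∀ (r t : ℕ) (X : Matrix (Fin r) (Fin r) 𝕜), N (r + t) (padMat t X) = N r X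

namespace CUIN

/-- The associated symmetric gauge function, evaluated on a real vector:
`ψ(x) = ‖diag(x)‖`. -/
noncomputable def psi (Φ : CUIN 𝕜) {n : ℕ} (x : Fin n → ℝ) : ℝ :=
  Φ.N n (Matrix.diagonal fun i => (x i : 𝕜))

/-- `η_ψ(l) = ψ(e_l)/l = ‖I_l‖/l`. -/
noncomputable def eta (Φ : CUIN 𝕜) (l : ℕ) : ℝ := Φ.N l 1 / l

/-- A compatible u.i.n. is strict if `‖A‖ = tr(A)·η_ψ(l)` for positive semidefinite `A`
forces `A = (tr A / l)·I`. -/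
def Strict (Φ : CUIN 𝕜) : Prop :=
  ∀ (l : ℕ) (A : Matrix (Fin l) (Fin l) 𝕜), A.PosSemidef →
    Φ.N l A = RCLike.re A.trace * Φ.eta l → A = (A.trace / (l : 𝕜)) • 1

/-- A 2-strongly strict compatible u.i.n.: strict, and on `M_2` any two self-adjoint
matrices `A ≺ B` with equal norms are unitarily equivalent. -/
def TwoStronglyStrict (Φ : CUIN 𝕜) : Prop :=
  Φ.Strict ∧ ∀ A B : Matrix (Fin 2) (Fin 2) 𝕜, A.IsHermitian → B.IsHermitian →
    MajMat A B → Φ.N 2 A = Φ.N 2 B →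
    ∃ U ∈ Matrix.unitaryGroup (Fin 2) 𝕜, A = star U * B * U

end CUIN

/-- Worst-case reconstruction error for `p` lost packets:
`e_p^ψ(V) = max_{|K| = p} ‖V*V − V*E_K V‖ = max_{|K| = p} ‖Σ_{i ∈ K} Vᵢ*Vᵢ‖`. -/
noncomputable def errP {m l d : ℕ} (Φ : CUIN 𝕜) (p : ℕ)
    (V : Fin m → Matrix (Fin l) (Fin d) 𝕜) : ℝ :=
  sSup {r : ℝ | ∃ K : Finset (Fin m), K.card = p ∧ r = Φ.N d (∑ i ∈ K, (V i)ᴴ * V i)}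

/-- The constant `c_{m,l,d} = √( (d/((m−1)·m·l))·(1 − d/(ml)) )`. -/
noncomputable def cmld (m l d : ℕ) : ℝ :=
  Real.sqrt ((d : ℝ) / (((m : ℝ) - 1) * m * l) * (1 - (d : ℝ) / ((m : ℝ) * l)))

/-- A uniformly weighted projective rank-`l` `(m,l,d)`-protocol:
`Σᵢ Vᵢ*Vᵢ = I_d` and `VᵢVᵢ* = (d/(ml))·I_l` for every `i`. -/
def IsUWP {m l d : ℕ} (V : Fin m → Matrix (Fin l) (Fin d) 𝕜) : Prop :=
  (∑ i, (V i)ᴴ * V i = 1) ∧ ∀ i, V i * (V i)ᴴ = ((d : 𝕜) / ((m : 𝕜) * (l : 𝕜))) • 1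

/-- A uniformly weighted projective rank-`l` `(m,l,d)`-protocol, stated via projections:
`Σᵢ Vᵢ*Vᵢ = I_d` and `Vᵢ*Vᵢ = (d/(ml))·Pᵢ` with `Pᵢ` rank-`l` orthogonal projections. -/
def IsUWPProj {m l d : ℕ} (V : Fin m → Matrix (Fin l) (Fin d) 𝕜) : Prop :=
  (∑ i, (V i)ᴴ * V i = 1) ∧ ∀ i, ∃ P : Matrix (Fin d) (Fin d) 𝕜,
    Pᴴ = P ∧ P * P = P ∧ P.rank = l ∧ (V i)ᴴ * V i = ((d : 𝕜) / ((m : 𝕜) * (l : 𝕜))) • P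

/-- Padding a vector with zeros to length `d`. -/
def padVec {l : ℕ} (d : ℕ) (x : Fin l → ℝ) : Fin d → ℝ :=
  fun j => if h : (j : ℕ) < l then x ⟨j, h⟩ else 0

end

/-! Write `s = d/m`, `c = c_{m,1,d}` and `G i j = V i * (V j)ᴴ`. Tightness gives the frame
potential `∑ i j, |G i j|² = tr (I_d) = d`; the diagonal contributes `m s²`, so
`∑_{i ≠ j} |G i j|² = d - m s² = m (m - 1) c²`. Hence some `|G i j| ≥ c`, and `|G i j| ≤ c` for
all `i ≠ j` forces equality everywhere.

For `i ≠ j`, `S = (V i)ᴴ V i + (V j)ᴴ V j` has rank at most two, `tr S = 2s` and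
`tr S² = 2s² + 2t²` with `t = |G i j|`, so its nonzero eigenvalues are `s ± t` and
`‖S‖ = ψ(s + t, s - t)`. By convexity and symmetry of `ψ` this is nondecreasing in `t`, which
gives the bounds on `e₂`. For a 2-strongly strict norm it is strictly increasing: for `c ≤ t`,
`diag(s + c, s - c) ≺ diag(s + t, s - t)`, so equal norms make the two matrices unitarily
equivalent, and comparing the traces of their squares gives `c = t`. -/

open Matrix

lemma Equiv.Perm.exists_apply_eq_apply_eq {α : Type*} [DecidableEq α] {a₀ a₁ b₀ b₁ : α}
    (ha : a₀ ≠ a₁) (hb : b₀ ≠ b₁) : ∃ σ : Equiv.Perm α, σ a₀ = b₀ ∧ σ a₁ = b₁ := by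
  refine ⟨Equiv.swap a₀ b₀ * Equiv.swap a₁ (Equiv.swap a₀ b₀ b₁), ?_, by simp⟩
  have hc : a₀ ≠ Equiv.swap a₀ b₀ b₁ := by
    rw [Ne, eq_comm, Equiv.swap_apply_eq_iff, Equiv.swap_apply_left]
    exact hb.symm
  simp [Equiv.swap_apply_of_ne_of_ne ha hc]

section PermMatrix

variable {R : Type*} [CommRing R] {n : Type*} [Fintype n] [DecidableEq n]

lemma Equiv.Perm.permMatrix_mem_unitaryGroup [StarRing R] (σ : Equiv.Perm n) :
    σ.permMatrix R ∈ unitaryGroup n R := by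
  rw [mem_unitaryGroup_iff', star_eq_conjTranspose, conjTranspose_permMatrix,
    ← permMatrix_mul, mul_inv_cancel, permMatrix_one]

lemma Matrix.diagonal_comp_perm (v : n → R) (σ : Equiv.Perm n) :
    diagonal (v ∘ σ) = σ.permMatrix R * diagonal v * σ⁻¹.permMatrix R := by
  ext i j
  simp [Equiv.Perm.permMatrix, PEquiv.toMatrix_toPEquiv_mul, PEquiv.mul_toMatrix_toPEquiv,
    diagonal_apply, Equiv.Perm.inv_def]

end PermMatrix

lemma eq_and_eq_or_eq_and_eq_of_add_eq_of_sq_add_sq_eq {x y p q : ℝ} (hsum : x + y = p + q)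
    (hsq : x ^ 2 + y ^ 2 = p ^ 2 + q ^ 2) : (x = p ∧ y = q) ∨ (x = q ∧ y = p) := by
  have h : (x - p) * (x - q) = 0 := by
    linear_combination ((x - y) / 2 - (p + q) / 2) * hsum + hsq / 2
  rcases mul_eq_zero.mp h with h | h
  · left; constructor <;> linarith
  · right; constructor <;> linarith

lemma Finset.exists_ne_subset_pair {α : Type*} [Fintype α] [DecidableEq α] {s : Finset α}
    (hs : s.card ≤ 2) (hα : 2 ≤ Fintype.card α) : ∃ a b, a ≠ b ∧ s ⊆ {a, b} := by
  obtain ⟨t, hst, ht⟩ := Finset.exists_superset_card_eq hs hα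
  obtain ⟨a, b, hab, rfl⟩ := Finset.card_eq_two.mp ht
  exact ⟨a, b, hab, hst⟩

namespace Matrix.IsHermitian

variable {𝕜 : Type*} [RCLike 𝕜] {n : Type*} [Fintype n] [DecidableEq n] {A : Matrix n n 𝕜}

lemma trace_mul_self_eq_sum_sq_eigenvalues (hA : A.IsHermitian) :
    (A * A).trace = ∑ i, ((hA.eigenvalues i ^ 2 : ℝ) : 𝕜) := by
  conv_lhs => rw [hA.spectral_theorem, ← map_mul, Unitary.conjStarAlgAut_apply]
  rw [trace_mul_cycle, Unitary.coe_star_mul_self, one_mul, diagonal_mul_diagonal, trace_diagonal]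
  simp [sq]

lemma exists_pair_eigenvalues_eq_zero_of_rank_le_two (hA : A.IsHermitian) (hrank : A.rank ≤ 2)
    (hn : 2 ≤ Fintype.card n) :
    ∃ a b, a ≠ b ∧ ∀ i, i ≠ a → i ≠ b → hA.eigenvalues i = 0 := by
  have hcard : (Finset.univ.filter fun i => hA.eigenvalues i ≠ 0).card ≤ 2 := by
    rwa [hA.rank_eq_card_non_zero_eigs, Fintype.card_subtype] at hrank
  obtain ⟨a, b, hab, hsub⟩ := Finset.exists_ne_subset_pair hcard hn
  refine ⟨a, b, hab, fun i hia hib => ?_⟩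
  by_contra hi
  simpa [hia, hib] using hsub (Finset.mem_filter.mpr ⟨Finset.mem_univ i, hi⟩)

lemma eigenvalues_eq_of_trace (hA : A.IsHermitian) {a b : n} (hab : a ≠ b)
    (hzero : ∀ i, i ≠ a → i ≠ b → hA.eigenvalues i = 0) {p q : ℝ}
    (htr : A.trace = ((p + q : ℝ) : 𝕜)) (htr2 : (A * A).trace = ((p ^ 2 + q ^ 2 : ℝ) : 𝕜)) :
    (hA.eigenvalues a = p ∧ hA.eigenvalues b = q) ∨
      (hA.eigenvalues a = q ∧ hA.eigenvalues b = p) := by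
  refine eq_and_eq_or_eq_and_eq_of_add_eq_of_sq_add_sq_eq ?_ ?_
  · rw [hA.trace_eq_sum_eigenvalues, Fintype.sum_eq_add a b hab] at htr
    · exact_mod_cast htr
    · rintro i ⟨hia, hib⟩
      simp [hzero i hia hib]
  · rw [hA.trace_mul_self_eq_sum_sq_eigenvalues, Fintype.sum_eq_add a b hab] at htr2
    · exact_mod_cast htr2
    · rintro i ⟨hia, hib⟩
      simp [hzero i hia hib]

end Matrix.IsHermitian

section Matrices

variable {𝕜 : Type*} [RCLike 𝕜]

lemma Matrix.trace_conjTranspose_mul_self_mul_conjTranspose_mul_self {d : ℕ}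
    (u w : Matrix (Fin 1) (Fin d) 𝕜) :
    (uᴴ * u * (wᴴ * w)).trace = ((‖(u * wᴴ) 0 0‖ ^ 2 : ℝ) : 𝕜) := by
  have h : u * wᴴ * w * uᴴ = (u * wᴴ) * (u * wᴴ)ᴴ := by
    rw [conjTranspose_mul, conjTranspose_conjTranspose, Matrix.mul_assoc]
  rw [Matrix.mul_assoc, trace_mul_comm, ← Matrix.mul_assoc, h, trace_fin_one, mul_apply,
    Fin.sum_univ_one, conjTranspose_apply, RCLike.star_def, RCLike.mul_conj]
  push_cast
  rfl

lemma Matrix.norm_mul_conjTranspose_comm {d : ℕ} (u w : Matrix (Fin 1) (Fin d) 𝕜) :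
    ‖(w * uᴴ) 0 0‖ = ‖(u * wᴴ) 0 0‖ := by
  rw [← conjTranspose_conjTranspose w, ← conjTranspose_mul, conjTranspose_apply, norm_star,
    conjTranspose_conjTranspose]

lemma Matrix.trace_mul_self_eq_of_eq_star_mul_mul {n : Type*} [Fintype n] [DecidableEq n]
    {A B U : Matrix n n 𝕜} (hU : U ∈ unitaryGroup n 𝕜) (h : A = star U * B * U) :
    (A * A).trace = (B * B).trace := by
  calc (A * A).trace = (star U * (B * (U * star U) * B) * U).trace := by
        simp only [h, Matrix.mul_assoc]
    _ = (B * B).trace := by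
        rw [mem_unitaryGroup_iff.mp hU, Matrix.mul_one, trace_mul_cycle,
          mem_unitaryGroup_iff.mp hU, Matrix.one_mul]

lemma Matrix.isHermitian_diagonal_ofReal {n : ℕ} (x : Fin n → ℝ) :
    (diagonal fun i => (x i : 𝕜)).IsHermitian :=
  isHermitian_diagonal_of_self_adjoint _ (funext fun i => RCLike.conj_ofReal (x i))

-- `eigenvalues` come in no prescribed order, so only symmetric functions of them are determined.
lemma Matrix.IsHermitian.max_and_sum_eigenvalues_diagonal_fin_two {p q : ℝ} (hqp : q ≤ p)
    (h : (diagonal fun i => ((![p, q] i : ℝ) : 𝕜)).IsHermitian) :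
    max (h.eigenvalues 0) (h.eigenvalues 1) = p ∧ h.eigenvalues 0 + h.eigenvalues 1 = p + q := by
  have htr : (diagonal fun i => ((![p, q] i : ℝ) : 𝕜)).trace = ((p + q : ℝ) : 𝕜) := by
    simp
  have htr2 : ((diagonal fun i => ((![p, q] i : ℝ) : 𝕜)) *
      diagonal fun i => ((![p, q] i : ℝ) : 𝕜)).trace = ((p ^ 2 + q ^ 2 : ℝ) : 𝕜) := by
    simp [sq]
  rcases h.eigenvalues_eq_of_trace zero_ne_one (fun i h0 h1 => by fin_cases i <;> simp_all)
    htr htr2 with ⟨h0, h1⟩ | ⟨h0, h1⟩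
  · rw [h0, h1]
    exact ⟨max_eq_left hqp, rfl⟩
  · rw [h0, h1]
    exact ⟨max_eq_right hqp, add_comm q p⟩

end Matrices

lemma kMaxSum_zero {n : ℕ} (x : Fin n → ℝ) : kMaxSum x 0 = 0 := by
  have h : {t : Finset (Fin n) | t.card = 0} = {∅} := by
    ext t
    simp
  rw [kMaxSum, h, Set.image_singleton, Finset.sum_empty, csSup_singleton]

lemma kMaxSum_self {n : ℕ} (x : Fin n → ℝ) : kMaxSum x n = ∑ i, x i := by
  have h : {t : Finset (Fin n) | t.card = n} = {Finset.univ} := by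
    ext t
    simp [← Finset.card_eq_iff_eq_univ]
  rw [kMaxSum, h, Set.image_singleton, csSup_singleton]

lemma kMaxSum_one_fin_two (x : Fin 2 → ℝ) : kMaxSum x 1 = max (x 0) (x 1) := by
  have h : (fun t : Finset (Fin 2) => ∑ i ∈ t, x i) '' {t | t.card = 1} = {x 0, x 1} := by
    ext r
    simp only [Set.mem_image, Set.mem_ofPred_eq, Finset.card_eq_one, Set.mem_insert_iff,
      Set.mem_singleton_iff]
    constructor
    · rintro ⟨_, ⟨i, rfl⟩, rfl⟩
      fin_cases i <;> simp
    · rintro (rfl | rfl)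
      exacts [⟨{0}, ⟨0, rfl⟩, by simp⟩, ⟨{1}, ⟨1, rfl⟩, by simp⟩]
  rw [kMaxSum, h, csSup_pair]

lemma subMajVec_fin_two {x y : Fin 2 → ℝ} (hmax : max (x 0) (x 1) ≤ max (y 0) (y 1))
    (hsum : x 0 + x 1 ≤ y 0 + y 1) : SubMajVec x y := by
  intro k hk
  interval_cases k
  · rw [kMaxSum_zero, kMaxSum_zero]
  · rwa [kMaxSum_one_fin_two, kMaxSum_one_fin_two]
  · rwa [kMaxSum_self, kMaxSum_self, Fin.sum_univ_two, Fin.sum_univ_two]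

section Majorization

variable {𝕜 : Type*} [RCLike 𝕜]

lemma majMat_diagonal_pair (s : ℝ) {c t : ℝ} (hc : 0 ≤ c) (hct : c ≤ t) :
    MajMat (diagonal fun i => ((![s + c, s - c] i : ℝ) : 𝕜))
      (diagonal fun i => ((![s + t, s - t] i : ℝ) : 𝕜)) := by
  have hA := isHermitian_diagonal_ofReal (𝕜 := 𝕜) ![s + c, s - c]
  have hB := isHermitian_diagonal_ofReal (𝕜 := 𝕜) ![s + t, s - t]
  obtain ⟨hmaxA, hsumA⟩ := hA.max_and_sum_eigenvalues_diagonal_fin_two (by linarith)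
  obtain ⟨hmaxB, hsumB⟩ := hB.max_and_sum_eigenvalues_diagonal_fin_two (by linarith)
  refine ⟨⟨hA, hB, subMajVec_fin_two ?_ ?_⟩, ?_⟩
  · rw [hmaxA, hmaxB]
    linarith
  · rw [hsumA, hsumB]
    linarith
  · simp only [trace_diagonal, Fin.sum_univ_two]
    simp

end Majorization

namespace CUIN

variable {𝕜 : Type*} [RCLike 𝕜] (Φ : CUIN 𝕜)

lemma N_diagonal_comp_perm {n : ℕ} (v : Fin n → 𝕜) (σ : Equiv.Perm (Fin n)) :
    Φ.N n (diagonal (v ∘ σ)) = Φ.N n (diagonal v) := by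
  rw [diagonal_comp_perm]
  exact Φ.invariant n _ ⟨_, σ.permMatrix_mem_unitaryGroup⟩ ⟨_, σ⁻¹.permMatrix_mem_unitaryGroup⟩

lemma psi_comp_perm {n : ℕ} (x : Fin n → ℝ) (σ : Equiv.Perm (Fin n)) :
    Φ.psi (x ∘ σ) = Φ.psi x :=
  Φ.N_diagonal_comp_perm (fun i => (x i : 𝕜)) σ

lemma N_eq_psi_eigenvalues {n : ℕ} {A : Matrix (Fin n) (Fin n) 𝕜} (hA : A.IsHermitian) :
    Φ.N n A = Φ.psi hA.eigenvalues := by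
  conv_lhs => rw [hA.spectral_theorem, Unitary.conjStarAlgAut_apply, ← Unitary.coe_star]
  exact Φ.invariant n _ _ _

lemma psi_add_le {n : ℕ} (x y : Fin n → ℝ) : Φ.psi (x + y) ≤ Φ.psi x + Φ.psi y := by
  unfold psi
  convert Φ.triangle n _ _ using 2
  rw [diagonal_add]
  simp

lemma psi_smul {n : ℕ} (r : ℝ) (x : Fin n → ℝ) : Φ.psi (r • x) = |r| * Φ.psi x := by
  unfold psi
  convert Φ.smul_eq n (r : 𝕜) _ using 2
  · ext i j
    by_cases h : i = j <;> simp [h]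
  · simp

lemma psi_padVec {l : ℕ} (e : ℕ) (x : Fin l → ℝ) : Φ.psi (padVec (l + e) x) = Φ.psi x := by
  rw [psi, psi, ← Φ.compatible l e]
  congr 1
  rw [padMat, ← diagonal_zero, fromBlocks_diagonal, reindex_apply, submatrix_diagonal_equiv]
  congr 1
  ext i
  refine Fin.addCases (fun j => ?_) (fun j => ?_) i <;> simp [padVec]

lemma psi_eq_psi_pair {d : ℕ} (hd : 2 ≤ d) {x : Fin d → ℝ} {a b : Fin d} (hab : a ≠ b)
    (hx : ∀ i, i ≠ a → i ≠ b → x i = 0) : Φ.psi x = Φ.psi ![x a, x b] := by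
  obtain ⟨e, rfl⟩ : ∃ e, d = 2 + e := ⟨d - 2, by omega⟩
  obtain ⟨σ, hσa, hσb⟩ := Equiv.Perm.exists_apply_eq_apply_eq
    (a₀ := (⟨0, by omega⟩ : Fin (2 + e))) (a₁ := ⟨1, by omega⟩) (by simp [Fin.ext_iff]) hab
  rw [← Φ.psi_comp_perm x σ, ← Φ.psi_padVec e ![x a, x b]]
  refine congrArg Φ.psi (funext fun i => ?_)
  rw [Function.comp_apply, padVec]
  split_ifs with hi
  · obtain ⟨_ | _ | k, _⟩ := i
    · simp [← hσa]
    · simp [← hσb]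
    · simp at hi
  · refine hx _ (hσa ▸ ?_) (hσb ▸ ?_) <;>
    · rw [σ.injective.ne_iff]
      rintro rfl
      exact hi (by simp)

lemma psi_swap (p q : ℝ) : Φ.psi ![q, p] = Φ.psi ![p, q] := by
  rw [← Φ.psi_comp_perm ![p, q] (Equiv.swap 0 1)]
  congr 1
  ext i
  fin_cases i <;> simp

lemma psi_pair_le (s : ℝ) {c t : ℝ} (hc : 0 ≤ c) (hct : c ≤ t) :
    Φ.psi ![s + c, s - c] ≤ Φ.psi ![s + t, s - t] := by
  obtain rfl | ht := (hc.trans hct).eq_or_lt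
  · rw [le_antisymm hct hc]
  set μ := (t + c) / (2 * t)
  set ν := (t - c) / (2 * t)
  have hμ : 0 ≤ μ := by positivity
  have hν : 0 ≤ ν := div_nonneg (by linarith) (by positivity)
  have hcomb : ![s + c, s - c] = μ • ![s + t, s - t] + ν • ![s - t, s + t] := by
    ext i
    fin_cases i <;> simp [μ, ν] <;> field_simp <;> ring
  calc Φ.psi ![s + c, s - c]
      ≤ Φ.psi (μ • ![s + t, s - t]) + Φ.psi (ν • ![s - t, s + t]) := hcomb ▸ Φ.psi_add_le _ _
    _ = (μ + ν) * Φ.psi ![s + t, s - t] := by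
      rw [Φ.psi_smul, Φ.psi_smul, Φ.psi_swap, abs_of_nonneg hμ, abs_of_nonneg hν, add_mul]
    _ = Φ.psi ![s + t, s - t] := by
      rw [show μ + ν = 1 by simp only [μ, ν]; field_simp; ring, one_mul]

lemma N_eq_psi_of_rank_le_two {d : ℕ} (hd : 2 ≤ d) {S : Matrix (Fin d) (Fin d) 𝕜}
    (hS : S.IsHermitian) (hrank : S.rank ≤ 2) {p q : ℝ} (htr : S.trace = ((p + q : ℝ) : 𝕜))
    (htr2 : (S * S).trace = ((p ^ 2 + q ^ 2 : ℝ) : 𝕜)) : Φ.N d S = Φ.psi ![p, q] := by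
  obtain ⟨a, b, hab, hzero⟩ :=
    hS.exists_pair_eigenvalues_eq_zero_of_rank_le_two hrank (by simpa using hd)
  rw [Φ.N_eq_psi_eigenvalues hS, Φ.psi_eq_psi_pair hd hab hzero]
  rcases hS.eigenvalues_eq_of_trace hab hzero htr htr2 with ⟨ha, hb⟩ | ⟨ha, hb⟩
  · rw [ha, hb]
  · rw [ha, hb, psi_swap]

lemma N_conjTranspose_mul_self_add {d : ℕ} (hd : 2 ≤ d) {s : ℝ}
    {u w : Matrix (Fin 1) (Fin d) 𝕜} (hu : u * uᴴ = (s : 𝕜) • 1) (hw : w * wᴴ = (s : 𝕜) • 1) :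
    Φ.N d (uᴴ * u + wᴴ * w) = Φ.psi ![s + ‖(u * wᴴ) 0 0‖, s - ‖(u * wᴴ) 0 0‖] := by
  have hrank : (uᴴ * u + wᴴ * w).rank ≤ 2 := by
    rw [← fromCols_mul_fromRows, ← conjTranspose_fromRows_eq_fromCols_conjTranspose]
    exact (rank_mul_le_right _ _).trans ((rank_le_card_height _).trans (by simp))
  have hsq (v : Matrix (Fin 1) (Fin d) 𝕜) (hv : v * vᴴ = (s : 𝕜) • 1) :
      (vᴴ * v * (vᴴ * v)).trace = ((s ^ 2 : ℝ) : 𝕜) := by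
    rw [trace_conjTranspose_mul_self_mul_conjTranspose_mul_self, hv]
    simp
  refine Φ.N_eq_psi_of_rank_le_two hd ((isHermitian_conjTranspose_mul_self u).add
    (isHermitian_conjTranspose_mul_self w)) hrank ?_ ?_
  · rw [trace_add, trace_mul_comm, hu, trace_mul_comm, hw, trace_smul, trace_one]
    simp
  · rw [Matrix.add_mul, Matrix.mul_add, Matrix.mul_add, trace_add, trace_add, trace_add,
      hsq u hu, hsq w hw, trace_conjTranspose_mul_self_mul_conjTranspose_mul_self,
      trace_conjTranspose_mul_self_mul_conjTranspose_mul_self, norm_mul_conjTranspose_comm]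
    push_cast
    ring

lemma TwoStronglyStrict.eq_of_psi_pair_eq {Φ : CUIN 𝕜} (hΦ : Φ.TwoStronglyStrict)
    (s : ℝ) {c t : ℝ} (hc : 0 ≤ c) (hct : c ≤ t)
    (h : Φ.psi ![s + c, s - c] = Φ.psi ![s + t, s - t]) : c = t := by
  obtain ⟨U, hU, hAB⟩ := hΦ.2 _ _ (isHermitian_diagonal_ofReal _)
    (isHermitian_diagonal_ofReal _) (majMat_diagonal_pair s hc hct) h
  have htr := trace_mul_self_eq_of_eq_star_mul_mul hU hAB
  simp only [diagonal_mul_diagonal, trace_diagonal, Fin.sum_univ_two] at htr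
  have hsq : c ^ 2 = t ^ 2 := by
    have : (s + c) * (s + c) + (s - c) * (s - c) = (s + t) * (s + t) + (s - t) * (s - t) := by
      exact_mod_cast htr
    linarith
  exact (pow_left_inj₀ hc (hc.trans hct) two_ne_zero).mp hsq

end CUIN

section ErrP

variable {𝕜 : Type*} [RCLike 𝕜] {m l d : ℕ} (Φ : CUIN 𝕜) (V : Fin m → Matrix (Fin l) (Fin d) 𝕜)

lemma le_errP {p : ℕ} {K : Finset (Fin m)} (hK : K.card = p) :
    Φ.N d (∑ i ∈ K, (V i)ᴴ * V i) ≤ errP Φ p V := by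
  refine le_csSup (Set.Finite.bddAbove ?_) ⟨K, hK, rfl⟩
  refine (Set.finite_range fun K : Finset (Fin m) => Φ.N d (∑ i ∈ K, (V i)ᴴ * V i)).subset ?_
  rintro _ ⟨K, -, rfl⟩
  exact ⟨K, rfl⟩

lemma errP_le {p : ℕ} (hp : p ≤ m) {r : ℝ}
    (h : ∀ K : Finset (Fin m), K.card = p → Φ.N d (∑ i ∈ K, (V i)ᴴ * V i) ≤ r) :
    errP Φ p V ≤ r := by
  obtain ⟨K, -, hK⟩ := Finset.exists_subset_card_eq (s := (Finset.univ : Finset (Fin m))) (n := p)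
    (by rwa [Finset.card_univ, Fintype.card_fin])
  refine csSup_le ⟨_, K, hK, rfl⟩ ?_
  rintro _ ⟨K, hK, rfl⟩
  exact h K hK

lemma le_errP_two {i j : Fin m} (hij : i ≠ j) :
    Φ.N d ((V i)ᴴ * V i + (V j)ᴴ * V j) ≤ errP Φ 2 V := by
  simpa [Finset.sum_pair hij] using le_errP Φ V (Finset.card_pair hij)

lemma errP_two_le (hm : 2 ≤ m) {r : ℝ}
    (h : ∀ i j, i ≠ j → Φ.N d ((V i)ᴴ * V i + (V j)ᴴ * V j) ≤ r) : errP Φ 2 V ≤ r := by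
  refine errP_le Φ V hm fun K hK => ?_
  obtain ⟨i, j, hij, rfl⟩ := Finset.card_eq_two.mp hK
  simpa [Finset.sum_pair hij] using h i j hij

end ErrP

lemma cmld_nonneg (m l d : ℕ) : 0 ≤ cmld m l d := Real.sqrt_nonneg _

lemma mul_cmld_sq {m d : ℕ} (hm : 2 ≤ m) (hdm : d ≤ m) :
    ((m * m - m : ℕ) : ℝ) * cmld m 1 d ^ 2 = d - m * ((d : ℝ) / m) ^ 2 := by
  have hm' : (2 : ℝ) ≤ m := by exact_mod_cast hm
  have hdm' : (d : ℝ) ≤ m := by exact_mod_cast hdm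
  have hm1 : (m : ℝ) - 1 ≠ 0 := by linarith
  have hnonneg :
      0 ≤ (d : ℝ) / (((m : ℝ) - 1) * m * (1 : ℕ)) * (1 - (d : ℝ) / ((m : ℝ) * (1 : ℕ))) := by
    rw [Nat.cast_one, mul_one, mul_one]
    refine mul_nonneg (div_nonneg d.cast_nonneg (by nlinarith)) ?_
    rw [sub_nonneg, div_le_one (by linarith)]
    exact hdm'
  rw [cmld, Real.sq_sqrt hnonneg, Nat.cast_sub (Nat.le_mul_self m)]
  push_cast
  field_simp

section Gram

variable {𝕜 : Type*} [RCLike 𝕜] {m d : ℕ} {V : Fin m → Matrix (Fin 1) (Fin d) 𝕜}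

lemma sum_sum_norm_sq_gram (hV : ∑ i, (V i)ᴴ * V i = 1) :
    ∑ i, ∑ j, ‖(V i * (V j)ᴴ) 0 0‖ ^ 2 = d := by
  have h : ((∑ i, ∑ j, ‖(V i * (V j)ᴴ) 0 0‖ ^ 2 : ℝ) : 𝕜) =
      ((∑ i, (V i)ᴴ * V i) * ∑ j, (V j)ᴴ * V j).trace := by
    simp only [Matrix.sum_mul, Matrix.mul_sum, trace_sum,
      trace_conjTranspose_mul_self_mul_conjTranspose_mul_self]
    push_cast
    exact Finset.sum_comm
  rw [hV, Matrix.one_mul, trace_one, Fintype.card_fin] at h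
  exact_mod_cast h

lemma sum_offDiag_norm_sq_gram (hV : ∑ i, (V i)ᴴ * V i = 1)
    (huw : ∀ i, V i * (V i)ᴴ = ((d : 𝕜) / m) • 1) :
    ∑ p ∈ Finset.univ.offDiag, ‖(V p.1 * (V p.2)ᴴ) 0 0‖ ^ 2 = d - m * ((d : ℝ) / m) ^ 2 := by
  have hdiag : ∀ i, ‖(V i * (V i)ᴴ) 0 0‖ ^ 2 = ((d : ℝ) / m) ^ 2 := by
    intro i
    rw [huw i]
    simp
  have htotal := sum_sum_norm_sq_gram hV
  rw [← Finset.sum_product', ← Finset.diag_union_offDiag,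
    Finset.sum_union (Finset.disjoint_diag_offDiag _), Finset.sum_diag] at htotal
  simp only [hdiag, Finset.sum_const, Finset.card_univ, Fintype.card_fin, nsmul_eq_mul] at htotal
  linarith

lemma sum_offDiag_norm_sq_gram_eq_cmld (hm : 2 ≤ m) (hdm : d ≤ m)
    (hV : ∑ i, (V i)ᴴ * V i = 1) (huw : ∀ i, V i * (V i)ᴴ = ((d : 𝕜) / m) • 1) :
    ∑ p ∈ Finset.univ.offDiag, ‖(V p.1 * (V p.2)ᴴ) 0 0‖ ^ 2 =
      ∑ _p ∈ (Finset.univ : Finset (Fin m)).offDiag, cmld m 1 d ^ 2 := by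
  rw [sum_offDiag_norm_sq_gram hV huw, Finset.sum_const, Finset.offDiag_card, Finset.card_univ,
    Fintype.card_fin, nsmul_eq_mul, mul_cmld_sq hm hdm]

lemma exists_cmld_le_norm_gram (hm : 2 ≤ m) (hdm : d ≤ m)
    (hV : ∑ i, (V i)ᴴ * V i = 1) (huw : ∀ i, V i * (V i)ᴴ = ((d : 𝕜) / m) • 1) :
    ∃ i j, i ≠ j ∧ cmld m 1 d ≤ ‖(V i * (V j)ᴴ) 0 0‖ := by
  have hne : (Finset.univ : Finset (Fin m)).offDiag.Nonempty :=
    ⟨(⟨0, by omega⟩, ⟨1, by omega⟩), by simp [Fin.ext_iff]⟩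
  obtain ⟨⟨i, j⟩, hij, hle⟩ :=
    Finset.exists_le_of_sum_le hne (sum_offDiag_norm_sq_gram_eq_cmld hm hdm hV huw).ge
  exact ⟨i, j, (Finset.mem_offDiag.mp hij).2.2,
    (pow_le_pow_iff_left₀ (cmld_nonneg m 1 d) (norm_nonneg _) two_ne_zero).mp hle⟩

lemma norm_gram_eq_cmld_of_le (hm : 2 ≤ m) (hdm : d ≤ m)
    (hV : ∑ i, (V i)ᴴ * V i = 1) (huw : ∀ i, V i * (V i)ᴴ = ((d : 𝕜) / m) • 1)
    (hle : ∀ i j, i ≠ j → ‖(V i * (V j)ᴴ) 0 0‖ ≤ cmld m 1 d) {i j : Fin m} (hij : i ≠ j) :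
    ‖(V i * (V j)ᴴ) 0 0‖ = cmld m 1 d := by
  have hsq := (Finset.sum_eq_sum_iff_of_le fun p hp => pow_le_pow_left₀ (norm_nonneg _)
    (hle p.1 p.2 (Finset.mem_offDiag.mp hp).2.2) 2).mp
    (sum_offDiag_norm_sq_gram_eq_cmld hm hdm hV huw) (i, j) (by simp [hij])
  exact (pow_left_inj₀ (norm_nonneg _) (cmld_nonneg m 1 d) two_ne_zero).mp hsq

end Gram

theorem stmt15_general (m d : ℕ) (hd : 1 < d) (hdm : d < m)
    (Φ : CUIN ℂ) (V : Fin m → Matrix (Fin 1) (Fin d) ℂ)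
    (hproto : ∑ i, (V i)ᴴ * V i = 1)
    (huw : ∀ i, V i * (V i)ᴴ = ((d : ℂ) / (m : ℂ)) • 1) :
    (∃ i j : Fin m, i ≠ j ∧ cmld m 1 d ≤ ‖(V i * (V j)ᴴ) 0 0‖) ∧
    Φ.psi (![(d : ℝ) / m + cmld m 1 d, (d : ℝ) / m - cmld m 1 d]) ≤ errP Φ 2 V ∧
    ((∀ i j : Fin m, i ≠ j → ∃ q : ℂ, ‖q‖ = 1 ∧
        V i * (V j)ᴴ = ((cmld m 1 d : ℂ) * q) • 1) →
      errP Φ 2 V = Φ.psi (![(d : ℝ) / m + cmld m 1 d, (d : ℝ) / m - cmld m 1 d])) ∧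
    (Φ.TwoStronglyStrict →
      errP Φ 2 V = Φ.psi (![(d : ℝ) / m + cmld m 1 d, (d : ℝ) / m - cmld m 1 d]) →
      ∀ i j : Fin m, i ≠ j → ‖(V i * (V j)ᴴ) 0 0‖ = cmld m 1 d) := by
  have hm : 2 ≤ m := by omega
  set s : ℝ := (d : ℝ) / m
  have hc := cmld_nonneg m 1 d
  have hweight (i : Fin m) : V i * (V i)ᴴ = (s : ℂ) • 1 := by
    simp only [s]
    push_cast
    exact huw i
  have hpair (i j : Fin m) (hij : i ≠ j) :
      Φ.psi ![s + ‖(V i * (V j)ᴴ) 0 0‖, s - ‖(V i * (V j)ᴴ) 0 0‖] ≤ errP Φ 2 V :=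
    (Φ.N_conjTranspose_mul_self_add hd (hweight i) (hweight j)).symm.trans_le
      (le_errP_two Φ V hij)
  obtain ⟨i, j, hij, hcij⟩ := exists_cmld_le_norm_gram hm hdm.le hproto huw
  have hlower := (Φ.psi_pair_le s hc hcij).trans (hpair i j hij)
  refine ⟨⟨i, j, hij, hcij⟩, hlower, fun hq => le_antisymm ?_ hlower, fun hΦ heq => ?_⟩
  · refine errP_two_le Φ V hm fun i j hij => ?_
    obtain ⟨q, hq, hG⟩ := hq i j hij
    rw [Φ.N_conjTranspose_mul_self_add (s := s) hd (hweight i) (hweight j), hG]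
    simp [hq, abs_of_nonneg hc]
  · refine fun i j hij => norm_gram_eq_cmld_of_le hm hdm.le hproto huw (fun i j hij => ?_) hij
    by_contra! hlt
    refine hlt.ne (hΦ.eq_of_psi_pair_eq s hc hlt.le ?_)
    exact le_antisymm (Φ.psi_pair_le s hc hlt.le) (heq ▸ hpair i j hij)

theorem stmt15 (m d : ℕ) (hm : 2 ≤ m) (hd : 1 < d) (hdm : d < m)
    (Φ : CUIN ℂ) (V : Fin m → Matrix (Fin 1) (Fin d) ℂ)
    (hproto : ∑ i, (V i)ᴴ * V i = 1)
    (huw : ∀ i, V i * (V i)ᴴ = ((d : ℂ) / (m : ℂ)) • 1) :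
    (∃ i j : Fin m, i ≠ j ∧ cmld m 1 d ≤ ‖(V i * (V j)ᴴ) 0 0‖) ∧
    Φ.psi (![(d : ℝ) / m + cmld m 1 d, (d : ℝ) / m - cmld m 1 d]) ≤ errP Φ 2 V ∧
    ((∀ i j : Fin m, i ≠ j → ∃ q : ℂ, ‖q‖ = 1 ∧
        V i * (V j)ᴴ = ((cmld m 1 d : ℂ) * q) • 1) →
      errP Φ 2 V = Φ.psi (![(d : ℝ) / m + cmld m 1 d, (d : ℝ) / m - cmld m 1 d])) ∧
    (Φ.TwoStronglyStrict →
      errP Φ 2 V = Φ.psi (![(d : ℝ) / m + cmld m 1 d, (d : ℝ) / m - cmld m 1 d]) →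
      ∀ i j : Fin m, i ≠ j → ‖(V i * (V j)ᴴ) 0 0‖ = cmld m 1 d) :=
  stmt15_general m d hd hdm Φ V hproto huw
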